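/- Let p ∈ (10/3, 6), a > 0, and define for θ ∈ ℝ, r > 0: h₂(θ, r) = ((2 e^{(3(p-2)/2)θ} + 3p - 8)/(3(p-2)))·(1 - e^{-r/a})/r - e^{θ}(1 - e^{-r/(a e^{θ})})/r - (2(e^{(3(p-2)/2)θ} - 1)/(3a(p-2))) e^{-r/a}. Then h₂(0, r) = 0 for all r > 0, and h₂(θ, r) > 0 for all θ ≠ 0 and r > 0. -/

import Mathlib

/-! With `k = 3(p-2)/2 > 1` and `c = r/a`, the function `θ ↦ r h₂(θ, r)` is
`F(θ) = 1 - e^{-c} + (e^{kθ} - 1)/k · w(c) - e^θ (1 - e^{-c e^{-θ}})`, where `w(x) = 1 - (1+x) e^{-x}`.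
Clearly `F(0) = 0`, and `F'(θ) = e^{kθ} w(c) - e^θ w(c e^{-θ})`. As `w` is positive and increasing on
`(0, ∞)`, and `k > 1`, both comparisons `e^{kθ} ≷ e^θ` and `c ≷ c e^{-θ}` go the way of the sign of `θ`;
so `F'` has the sign of `θ` and `θ = 0` is the strict global minimum of `F`. -/

open Real

lemma one_add_mul_exp_neg_strictAntiOn :
    StrictAntiOn (fun x : ℝ => (1 + x) * exp (-x)) (Set.Ici 0) := by
  have hderiv (x : ℝ) : HasDerivAt (fun x : ℝ => (1 + x) * exp (-x)) (-(x * exp (-x))) x :=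
    (((hasDerivAt_id' x).const_add 1).fun_mul (hasDerivAt_neg x).exp).congr_deriv (by ring)
  refine strictAntiOn_of_deriv_neg (convex_Ici 0) (by fun_prop) fun x hx => ?_
  rw [interior_Ici, Set.mem_Ioi] at hx
  rw [(hderiv x).deriv, neg_lt_zero]
  positivity

lemma one_add_mul_exp_neg_lt_one {x : ℝ} (hx : 0 < x) : (1 + x) * exp (-x) < 1 := by
  simpa using one_add_mul_exp_neg_strictAntiOn Set.self_mem_Ici hx.le hx

lemma lt_apply_of_hasDerivAt_sign {f f' : ℝ → ℝ} (hf : ∀ t, HasDerivAt f (f' t) t)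
    (hpos : ∀ t, 0 < t → 0 < f' t) (hneg : ∀ t, t < 0 → f' t < 0) {θ : ℝ} (hθ : θ ≠ 0) :
    f 0 < f θ := by
  have hcont : Continuous f := continuous_iff_continuousAt.2 fun t => (hf t).continuousAt
  rcases hθ.lt_or_gt with hθ | hθ
  · refine strictAntiOn_of_deriv_neg (convex_Iic 0) hcont.continuousOn (fun t ht => ?_)
      (Set.mem_Iic.2 hθ.le) Set.self_mem_Iic hθ
    rw [interior_Iic] at ht
    exact (hf t).deriv ▸ hneg t ht
  · refine strictMonoOn_of_deriv_pos (convex_Ici 0) hcont.continuousOn (fun t ht => ?_)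
      Set.self_mem_Ici (Set.mem_Ici.2 hθ.le) hθ
    rw [interior_Ici] at ht
    exact (hf t).deriv ▸ hpos t ht

noncomputable def scaledH2 (k c θ : ℝ) : ℝ :=
  1 - exp (-c) + (exp (k * θ) - 1) / k * (1 - (1 + c) * exp (-c))
    - exp θ * (1 - exp (-(c * exp (-θ))))

lemma scaledH2_zero (k c : ℝ) : scaledH2 k c 0 = 0 := by
  simp [scaledH2]

lemma hasDerivAt_scaledH2 {k : ℝ} (hk : k ≠ 0) (c θ : ℝ) :
    HasDerivAt (scaledH2 k c)
      (exp (k * θ) * (1 - (1 + c) * exp (-c))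
        - exp θ * (1 - (1 + c * exp (-θ)) * exp (-(c * exp (-θ))))) θ := by
  have hpow : HasDerivAt (fun t => exp (k * t)) (exp (k * θ) * k) θ :=
    ((hasDerivAt_id' θ).const_mul k).exp.congr_deriv (by ring)
  have hinner : HasDerivAt (fun t => -(c * exp (-t))) (c * exp (-θ)) θ :=
    (((hasDerivAt_neg' θ).exp.const_mul c).neg).congr_deriv (by ring)
  have htail := (hasDerivAt_exp θ).fun_mul ((hasDerivAt_const θ 1).fun_sub hinner.exp)
  refine ((((hpow.sub_const 1).div_const k).mul_const _).const_add _ |>.fun_sub htail).congr_deriv ?_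
  field_simp
  ring

lemma scaledH2_deriv_pos {k c t : ℝ} (hk : 1 < k) (hc : 0 < c) (ht : 0 < t) :
    exp t * (1 - (1 + c * exp (-t)) * exp (-(c * exp (-t))))
      < exp (k * t) * (1 - (1 + c) * exp (-c)) := by
  have hshrink : c * exp (-t) < c := mul_lt_of_lt_one_right hc (exp_lt_one_iff.2 (by linarith))
  have hgap := one_add_mul_exp_neg_strictAntiOn (Set.mem_Ici.2 (by positivity)) hc.le hshrink
  calc exp t * (1 - (1 + c * exp (-t)) * exp (-(c * exp (-t))))
      < exp t * (1 - (1 + c) * exp (-c)) := by gcongr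
    _ < exp (k * t) * (1 - (1 + c) * exp (-c)) := by
      have := one_add_mul_exp_neg_lt_one hc
      gcongr
      nlinarith

lemma scaledH2_deriv_neg {k c t : ℝ} (hk : 1 < k) (hc : 0 < c) (ht : t < 0) :
    exp (k * t) * (1 - (1 + c) * exp (-c))
      < exp t * (1 - (1 + c * exp (-t)) * exp (-(c * exp (-t)))) := by
  have hstretch : c < c * exp (-t) := lt_mul_of_one_lt_right hc (one_lt_exp_iff.2 (by linarith))
  have hgap := one_add_mul_exp_neg_strictAntiOn (Set.mem_Ici.2 hc.le)
    (Set.mem_Ici.2 (by positivity)) hstretch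
  have := one_add_mul_exp_neg_lt_one hc
  calc exp (k * t) * (1 - (1 + c) * exp (-c))
      < exp t * (1 - (1 + c) * exp (-c)) := by
        gcongr
        nlinarith
    _ < exp t * (1 - (1 + c * exp (-t)) * exp (-(c * exp (-t)))) := by gcongr

theorem scaledH2_pos {k c θ : ℝ} (hk : 1 < k) (hc : 0 < c) (hθ : θ ≠ 0) : 0 < scaledH2 k c θ :=
  scaledH2_zero k c ▸ lt_apply_of_hasDerivAt_sign (hasDerivAt_scaledH2 (by linarith : 0 < k).ne' c)
    (fun _ ht => sub_pos.2 (scaledH2_deriv_pos hk hc ht))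
    (fun _ ht => sub_neg.2 (scaledH2_deriv_neg hk hc ht)) hθ

noncomputable def h2 (p a θ r : ℝ) : ℝ :=
  (2 * exp (3*(p-2)/2 * θ) + 3*p - 8) / (3*(p-2)) * ((1 - exp (-r/a)) / r)
    - exp θ * (1 - exp (-r / (a * exp θ))) / r
    - 2 * (exp (3*(p-2)/2 * θ) - 1) / (3*a*(p-2)) * exp (-r/a)

lemma mul_h2_eq_scaledH2 {p a : ℝ} (hp : p ≠ 2) (ha : a ≠ 0) (θ : ℝ) {r : ℝ} (hr : r ≠ 0) :
    r * h2 p a θ r = scaledH2 (3*(p-2)/2) (r/a) θ := by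
  have hp' : p - 2 ≠ 0 := sub_ne_zero.2 hp
  have harg : -r / (a * exp θ) = -(r / a * exp (-θ)) := by
    rw [exp_neg]; field_simp
  rw [h2, scaledH2, harg, neg_div]
  field_simp
  ring

theorem h2_zero_and_pos_general (p a : ℝ) (hp₁ : 10/3 < p) (ha : 0 < a) :
    (∀ r : ℝ, 0 < r →
      (2 * exp (3*(p-2)/2 * 0) + 3*p - 8) / (3*(p-2)) * ((1 - exp (-r/a)) / r)
        - exp (0:ℝ) * (1 - exp (-r / (a * exp 0))) / r
        - 2 * (exp (3*(p-2)/2 * 0) - 1) / (3*a*(p-2)) * exp (-r/a) = 0) ∧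
    ∀ θ : ℝ, θ ≠ 0 → ∀ r : ℝ, 0 < r →
      0 < (2 * exp (3*(p-2)/2 * θ) + 3*p - 8) / (3*(p-2)) * ((1 - exp (-r/a)) / r)
        - exp θ * (1 - exp (-r / (a * exp θ))) / r
        - 2 * (exp (3*(p-2)/2 * θ) - 1) / (3*a*(p-2)) * exp (-r/a) := by
  have hp : p ≠ 2 := by linarith
  refine ⟨fun r hr => ?_, fun θ hθ r hr => ?_⟩
  · show h2 p a 0 r = 0
    have := mul_h2_eq_scaledH2 hp ha.ne' 0 hr.ne'
    rw [scaledH2_zero] at this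
    exact (mul_eq_zero.1 this).resolve_left hr.ne'
  · show 0 < h2 p a θ r
    have := mul_h2_eq_scaledH2 hp ha.ne' θ hr.ne' ▸
      scaledH2_pos (k := 3*(p-2)/2) (by linarith) (div_pos hr ha) hθ
    exact pos_of_mul_pos_right this hr.le

/-- For `p ∈ (10/3, 6)` and `a > 0`, the function
`h₂(θ, r) = ((2 e^{(3(p-2)/2)θ} + 3p - 8)/(3(p-2)))·(1 - e^{-r/a})/r
  - e^{θ}(1 - e^{-r/(a e^{θ})})/r - (2(e^{(3(p-2)/2)θ} - 1)/(3a(p-2))) e^{-r/a}`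
vanishes at `θ = 0` for every `r > 0`, and is positive for all `θ ≠ 0`, `r > 0`. -/
theorem h2_zero_and_pos (p a : ℝ) (hp₁ : 10/3 < p) (hp₂ : p < 6) (ha : 0 < a) :
    (∀ r : ℝ, 0 < r →
      (2 * exp (3*(p-2)/2 * 0) + 3*p - 8) / (3*(p-2)) * ((1 - exp (-r/a)) / r)
        - exp (0:ℝ) * (1 - exp (-r / (a * exp 0))) / r
        - 2 * (exp (3*(p-2)/2 * 0) - 1) / (3*a*(p-2)) * exp (-r/a) = 0) ∧
    ∀ θ : ℝ, θ ≠ 0 → ∀ r : ℝ, 0 < r →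
      0 < (2 * exp (3*(p-2)/2 * θ) + 3*p - 8) / (3*(p-2)) * ((1 - exp (-r/a)) / r)
        - exp θ * (1 - exp (-r / (a * exp θ))) / r
        - 2 * (exp (3*(p-2)/2 * θ) - 1) / (3*a*(p-2)) * exp (-r/a) :=
  h2_zero_and_pos_general p a hp₁ ha
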